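/- arXiv:2211.16849 — 5 statements merged into one kernel-verified Lean document; each statement's English description precedes it below -/
import Mathlib

section
/- Let μ > 0, h : (a,b) → ℝ positive with h'/h > 0, and let u satisfy u'' = -(h'/h)·u' - μ·u on (a,b) with u > 0 on (a,b) and u(a) = u(b) = 0. Then u is unimodal: there exists c ∈ (a,b) such that u is increasing on (a,c) and decreasing on (c,b). -/
/-!
At a critical point of `u` the damping term `(h'/h) u'` vanishes, so `u'' = -μ u < 0` there.
Hence `u` has no interior local minimum. A continuous function on an interval without interior
local minima is quasi-concave, so it increases up to any maximum point and decreases after it;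
the maximum is interior because `u` vanishes at the endpoints and is positive inside.
-/

open Set Filter Topology

theorem IsLocalMin.nonneg_of_hasDerivAt_of_hasDerivAt {f f' : ℝ → ℝ} {f'' x : ℝ}
    (h : IsLocalMin f x) (hf : ∀ᶠ y in 𝓝 x, HasDerivAt f (f' y) y)
    (hf' : HasDerivAt f' f'' x) : 0 ≤ f'' := by
  by_contra! hneg
  have hx : f' x = 0 := h.hasDerivAt_eq_zero hf.self_of_nhds
  have hf'_neg : ∀ᶠ y in 𝓝[>] x, f' y < 0 := by
    filter_upwards [nhdsGT_le_nhdsNE x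
        ((hasDerivAt_iff_tendsto_slope.mp hf').eventually (eventually_lt_nhds hneg)),
      self_mem_nhdsWithin] with y hslope hxy
    rw [slope_def_field, hx, sub_zero, div_neg_iff] at hslope
    exact (hslope.resolve_left fun h ↦ lt_asymm (mem_Ioi.mp hxy) (sub_neg.mp h.2)).1
  obtain ⟨d, hxd, hd⟩ := (nhdsGT_basis x).eventually_iff.mp <|
    ((hf.and h).filter_mono nhdsWithin_le_nhds).and hf'_neg
  set y := (x + d) / 2
  have hxy : x < y := by grind
  have hyd : y < d := by grind
  have hcont : ContinuousOn f (Icc x y) := fun z hz ↦ by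
    rcases hz.1.eq_or_lt with rfl | hxz
    · exact hf.self_of_nhds.continuousAt.continuousWithinAt
    · exact (hd ⟨hxz, hz.2.trans_lt hyd⟩).1.1.continuousAt.continuousWithinAt
  obtain ⟨ξ, hξ, hmvt⟩ := exists_hasDerivAt_eq_slope f f' hxy hcont
    fun ξ hξ ↦ (hd ⟨hξ.1, hξ.2.trans hyd⟩).1.1
  have hdec : (f y - f x) / (y - x) < 0 := hmvt ▸ (hd ⟨hξ.1, hξ.2.trans hyd⟩).2
  have hmin : f x ≤ f y := (hd ⟨hxy, hyd⟩).1.2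
  rw [div_neg_iff] at hdec
  grind

theorem ContinuousOn.min_le_of_forall_not_isLocalMin {f : ℝ → ℝ} {x y z : ℝ}
    (hf : ContinuousOn f (Icc x y)) (hmin : ∀ m ∈ Ioo x y, ¬IsLocalMin f m) (hz : z ∈ Icc x y) :
    min (f x) (f y) ≤ f z := by
  by_contra! hlt
  obtain ⟨m, hm, hfm⟩ := isCompact_Icc.exists_isMinOn ⟨z, hz⟩ hf
  have hmz : f m < min (f x) (f y) := (hfm hz).trans_lt hlt
  have hmx : m ≠ x := by rintro rfl; exact (min_le_left _ _).not_gt hmz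
  have hmy : m ≠ y := by rintro rfl; exact (min_le_right _ _).not_gt hmz
  have hm' : m ∈ Ioo x y := ⟨hm.1.lt_of_ne hmx.symm, hm.2.lt_of_ne hmy⟩
  exact hmin m hm' (hfm.isLocalMin (Icc_mem_nhds hm'.1 hm'.2))

theorem monotoneOn_Ioc_of_isMaxOn {f : ℝ → ℝ} {a b c : ℝ} (hf : ContinuousOn f (Icc a b))
    (hmin : ∀ m ∈ Ioo a b, ¬IsLocalMin f m) (hmax : IsMaxOn f (Icc a b) c) (hcb : c ≤ b) :
    MonotoneOn f (Ioc a c) := by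
  intro x hx y hy hxy
  have hxy_min := (hf.mono (Icc_subset_Icc hx.1.le hcb)).min_le_of_forall_not_isLocalMin
    (fun m hm ↦ hmin m ⟨hx.1.trans hm.1, hm.2.trans_le hcb⟩) ⟨hxy, hy.2⟩
  rwa [min_eq_left (hmax ⟨hx.1.le, hx.2.trans hcb⟩)] at hxy_min

theorem antitoneOn_Ico_of_isMaxOn {f : ℝ → ℝ} {a b c : ℝ} (hf : ContinuousOn f (Icc a b))
    (hmin : ∀ m ∈ Ioo a b, ¬IsLocalMin f m) (hmax : IsMaxOn f (Icc a b) c) (hac : a ≤ c) :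
    AntitoneOn f (Ico c b) := by
  intro x hx y hy hxy
  have hxy_min := (hf.mono (Icc_subset_Icc hac hy.2.le)).min_le_of_forall_not_isLocalMin
    (fun m hm ↦ hmin m ⟨hac.trans_lt hm.1, hm.2.trans hy.2⟩) ⟨hx.1, hxy⟩
  rwa [min_eq_right (hmax ⟨hac.trans hy.1, hy.2.le⟩)] at hxy_min

theorem stmt3_general (a b μ : ℝ) (hab : a < b) (hμ : 0 < μ)
    (h u u' u'' : ℝ → ℝ)
    (hcont : ContinuousOn u (Set.Icc a b))
    (hu' : ∀ x ∈ Set.Ioo a b, HasDerivAt u (u' x) x)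
    (hu'' : ∀ x ∈ Set.Ioo a b, HasDerivAt u' (u'' x) x)
    (hpos : ∀ x ∈ Set.Ioo a b, 0 < u x)
    (hode : ∀ x ∈ Set.Ioo a b,
      u'' x = -(deriv h x / h x) * u' x - μ * u x)
    (hua : u a = 0) (hub : u b = 0) :
    ∃ c ∈ Set.Ioo a b, MonotoneOn u (Set.Ioc a c) ∧ AntitoneOn u (Set.Ico c b) := by
  have hno_min : ∀ m ∈ Ioo a b, ¬IsLocalMin u m := fun m hm hmin ↦ by
    have hu'_eq : ∀ᶠ y in 𝓝 m, HasDerivAt u (u' y) y :=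
      eventually_of_mem (Ioo_mem_nhds hm.1 hm.2) hu'
    have hcrit : u' m = 0 := hmin.hasDerivAt_eq_zero (hu' m hm)
    have hconvex := hmin.nonneg_of_hasDerivAt_of_hasDerivAt hu'_eq (hu'' m hm)
    rw [hode m hm, hcrit] at hconvex
    nlinarith [hpos m hm]
  obtain ⟨c, hc, hmax⟩ := isCompact_Icc.exists_isMaxOn (nonempty_Icc.mpr hab.le) hcont
  have hmid : (a + b) / 2 ∈ Ioo a b := ⟨by linarith, by linarith⟩
  have huc : 0 < u c := (hpos _ hmid).trans_le (hmax (Ioo_subset_Icc_self hmid))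
  have hc' : c ∈ Ioo a b :=
    ⟨hc.1.lt_of_ne (by rintro rfl; linarith), hc.2.lt_of_ne (by rintro rfl; linarith)⟩
  exact ⟨c, hc', monotoneOn_Ioc_of_isMaxOn hcont hno_min hmax hc.2,
    antitoneOn_Ico_of_isMaxOn hcont hno_min hmax hc.1⟩

theorem stmt3 (a b μ : ℝ) (hab : a < b) (hμ : 0 < μ)
    (h u u' u'' : ℝ → ℝ)
    (hcont : ContinuousOn u (Set.Icc a b))
    (hu' : ∀ x ∈ Set.Ioo a b, HasDerivAt u (u' x) x)
    (hu'' : ∀ x ∈ Set.Ioo a b, HasDerivAt u' (u'' x) x)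
    (hpos : ∀ x ∈ Set.Ioo a b, 0 < u x)
    (hhpos : ∀ x ∈ Set.Ioo a b, 0 < h x)
    (hh : ∀ x ∈ Set.Ioo a b, 0 < deriv h x / h x)
    (hode : ∀ x ∈ Set.Ioo a b,
      u'' x = -(deriv h x / h x) * u' x - μ * u x)
    (hua : u a = 0) (hub : u b = 0) :
    ∃ c ∈ Set.Ioo a b, MonotoneOn u (Set.Ioc a c) ∧ AntitoneOn u (Set.Ico c b) :=
  stmt3_general a b μ hab hμ h u u' u'' hcont hu' hu'' hpos hode hua hub
end

section
/- Let j_{ν,n} denote the n-th positive zero of the Bessel function J_ν. If |ν| ≥ 1/2, then for all n ≥ 1, j_{ν,n+1} - j_{ν,n} ≥ π and the gap sequence is nonincreasing: j_{ν,n+1} - j_{ν,n} ≥ j_{ν,n+2} - j_{ν,n+1}. If |ν| < 1/2, both inequalities are reversed. -/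
/-!
For `x > 0` the function `u(x) = √x J_ν(x)` solves `u'' + q u = 0` with
`q(x) = 1 + (1/4 - ν²)/x²`, and has the same positive zeros as `J_ν`.
If `|ν| > 1/2`, then `q < 1` and `q` is increasing. Sturm comparison with `sin (k (x - a))`
shows that consecutive zeros are at least `π` apart, and comparison of `u` with its translate
`u(x - δ)`, whose potential `q(x - δ)` is smaller, shows that the gaps shrink. For `|ν| < 1/2`
every inequality is reversed. For `|ν| = 1/2` we have `q ≡ 1`, the Wronskian of `u` and
`sin (x - a)` is constant, and the zeros are exactly `π` apart.
-/

/-- The Bessel function of the first kind of order `ν`, defined by its power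
series `J_ν(x) = ∑ (-1)^m / (m! Γ(ν+m+1)) (x/2)^(2m+ν)` (for `x > 0`). -/
noncomputable def besselJ (ν x : ℝ) : ℝ :=
  ∑' m : ℕ, ((-1) ^ m / ((Nat.factorial m : ℝ) * Real.Gamma (ν + m + 1)))
    * (x / 2) ^ (2 * (m : ℝ) + ν)

/-- `j : ℕ → ℝ` (indexed from `1`) enumerates the positive zeros of `J_ν` in
increasing order: `j n` is the `n`-th positive zero. -/
def IsBesselZeroSeq (ν : ℝ) (j : ℕ → ℝ) : Prop :=
  (∀ n, 1 ≤ n → 0 < j n) ∧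
  (∀ m n, 1 ≤ m → m < n → j m < j n) ∧
  (∀ n, 1 ≤ n → besselJ ν (j n) = 0) ∧
  (∀ x, 0 < x → besselJ ν x = 0 → ∃ n, 1 ≤ n ∧ j n = x)

open Set Filter intervalIntegral Real

def derivCoeff (c : ℕ → ℝ) (m : ℕ) : ℝ := (m + 1) * c (m + 1)

noncomputable def seriesSum (c : ℕ → ℝ) (y : ℝ) : ℝ := ∑' m, c m * y ^ m

section PowerSeries

variable {c : ℕ → ℝ}

lemma summable_norm_derivCoeff_mul_pow (hc : ∀ r : ℝ, Summable fun m => ‖c m * r ^ m‖)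
    (r : ℝ) :
    Summable fun m => ‖derivCoeff c m * r ^ m‖ := by
  refine ((summable_nat_add_iff 1).2 (hc (2 * (|r| + 1)))).of_nonneg_of_le
    (fun _ => norm_nonneg _) fun m => ?_
  have h2 : ((m : ℝ) + 1) ≤ 2 ^ (m + 1) := by exact_mod_cast Nat.lt_two_pow_self.le
  have hr : |r| ^ m ≤ (|r| + 1) ^ (m + 1) :=
    (pow_le_pow_left₀ (abs_nonneg r) (by linarith) m).trans
      (pow_le_pow_right₀ (by linarith [abs_nonneg r]) m.le_succ)
  calc ‖derivCoeff c m * r ^ m‖ = (m + 1) * |c (m + 1)| * |r| ^ m := by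
        rw [derivCoeff, norm_mul, norm_mul, norm_pow, Real.norm_eq_abs, Real.norm_eq_abs,
          Real.norm_eq_abs, abs_of_nonneg (by positivity : (0 : ℝ) ≤ m + 1)]
    _ ≤ 2 ^ (m + 1) * |c (m + 1)| * (|r| + 1) ^ (m + 1) := by gcongr
    _ = ‖c (m + 1) * (2 * (|r| + 1)) ^ (m + 1)‖ := by
        rw [norm_mul, norm_pow, Real.norm_eq_abs, Real.norm_of_nonneg (by positivity), mul_pow]
        ring

lemma hasDerivAt_seriesSum (hc : ∀ r : ℝ, Summable fun m => ‖c m * r ^ m‖) (y : ℝ) :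
    HasDerivAt (seriesSum c) (seriesSum (derivCoeff c) y) y := by
  set R := |y| + 1
  have hy : y ∈ Ioo (-R) R := abs_lt.1 (lt_add_one _)
  have hbound : Summable fun m => ‖c m‖ * (m * R ^ (m - 1)) := by
    refine (summable_nat_add_iff 1).1 ((summable_norm_derivCoeff_mul_pow hc R).congr fun m => ?_)
    simp only [derivCoeff, norm_mul, norm_pow, Real.norm_eq_abs, Nat.cast_add, Nat.cast_one,
      add_tsub_cancel_right, abs_of_nonneg (by positivity : (0 : ℝ) ≤ R),
      abs_of_nonneg (by positivity : (0 : ℝ) ≤ (m : ℝ) + 1)]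
    ring
  have hderiv := hasDerivAt_tsum_of_isPreconnected hbound isOpen_Ioo isPreconnected_Ioo
    (fun m z _ => (hasDerivAt_pow m z).const_mul (c m)) (fun m z hz => ?_) hy (hc y).of_norm hy
  · have hsum : HasSum (fun m => c m * (m * y ^ (m - 1))) (seriesSum (derivCoeff c) y) := by
      refine (hasSum_nat_add_iff' 1).1 ?_
      simpa [seriesSum, derivCoeff, mul_comm, mul_left_comm] using
        (summable_norm_derivCoeff_mul_pow hc y).of_norm.hasSum
    rwa [hsum.tsum_eq] at hderiv
  · have hzR : ‖z‖ ≤ R := abs_le.2 ⟨hz.1.le, hz.2.le⟩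
    rw [norm_mul, norm_mul, norm_pow, Real.norm_natCast, Real.norm_eq_abs]
    gcongr

lemma hasSum_natCast_mul_mul_pow {y S : ℝ} (h : HasSum (fun m => derivCoeff c m * y ^ m) S) :
    HasSum (fun m => m * c m * y ^ m) (y * S) := by
  refine (hasSum_nat_add_iff' 1).1 ?_
  simpa [derivCoeff, pow_succ, mul_comm, mul_left_comm, mul_assoc] using h.mul_left y

end PowerSeries

lemma IsPreconnected.exists_mul_pos_of_ne_zero {α : Type*} [TopologicalSpace α] {s : Set α}
    (hs : IsPreconnected s) {f : α → ℝ} (hf : ContinuousOn f s) (h0 : ∀ x ∈ s, f x ≠ 0) :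
    ∃ σ : ℝ, ∀ x ∈ s, 0 < σ * f x := by
  by_contra! h
  obtain ⟨x, hx, hfx⟩ := h 1
  obtain ⟨y, hy, hfy⟩ := h (-1)
  obtain ⟨z, hz, hfz⟩ := hs.intermediate_value hx hy hf
    (show (0 : ℝ) ∈ Icc (f x) (f y) from ⟨by linarith, by linarith⟩)
  exact h0 z hz hfz

section EndpointSigns

variable {f : ℝ → ℝ} {a b d : ℝ}

lemma HasDerivAt.nonneg_of_eq_zero_of_pos (hd : HasDerivAt f d a) (hfa : f a = 0) (hab : a < b)
    (hpos : ∀ x ∈ Ioo a b, 0 < f x) : 0 ≤ d := by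
  refine ge_of_tendsto ((hasDerivWithinAt_iff_tendsto_slope' self_notMem_Ioi).1
    hd.hasDerivWithinAt) ?_
  filter_upwards [Ioo_mem_nhdsGT hab] with x hx
  rw [slope_def_field, hfa]
  exact div_nonneg (by linarith [hpos x hx]) (by linarith [hx.1])

lemma HasDerivAt.nonpos_of_eq_zero_of_pos (hd : HasDerivAt f d b) (hfb : f b = 0) (hab : a < b)
    (hpos : ∀ x ∈ Ioo a b, 0 < f x) : d ≤ 0 := by
  refine le_of_tendsto ((hasDerivWithinAt_iff_tendsto_slope' self_notMem_Iio).1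
    hd.hasDerivWithinAt) ?_
  filter_upwards [Ioo_mem_nhdsLT hab] with x hx
  rw [slope_def_field, hfb]
  exact div_nonpos_of_nonneg_of_nonpos (by linarith [hpos x hx]) (by linarith [hx.2])

lemma ContinuousAt.nonneg_left_of_pos (hf : ContinuousAt f a) (hab : a < b)
    (hpos : ∀ x ∈ Ioo a b, 0 < f x) : 0 ≤ f a :=
  ge_of_tendsto (hf.tendsto.mono_left nhdsWithin_le_nhds)
    (eventually_of_mem (Ioo_mem_nhdsGT hab) fun x hx => (hpos x hx).le)

lemma ContinuousAt.nonneg_right_of_pos (hf : ContinuousAt f b) (hab : a < b)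
    (hpos : ∀ x ∈ Ioo a b, 0 < f x) : 0 ≤ f b :=
  ge_of_tendsto (hf.tendsto.mono_left nhdsWithin_le_nhds)
    (eventually_of_mem (Ioo_mem_nhdsLT hab) fun x hx => (hpos x hx).le)

end EndpointSigns

def IsSturmSolution (p u u' : ℝ → ℝ) (s : Set ℝ) : Prop :=
  ∀ x ∈ s, HasDerivAt u (u' x) x ∧ HasDerivAt u' (-(p x * u x)) x

lemma isSturmSolution_sin (k c : ℝ) :
    IsSturmSolution (fun _ => k ^ 2) (fun x => sin (k * (x - c))) (fun x => k * cos (k * (x - c)))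
      univ := by
  intro x _
  have hlin : HasDerivAt (fun x => k * (x - c)) k x := by
    simpa using ((hasDerivAt_id x).sub_const c).const_mul k
  exact ⟨((hasDerivAt_sin _).comp x hlin).congr_deriv (by ring),
    (((hasDerivAt_cos _).comp x hlin).const_mul k).congr_deriv (by ring)⟩

namespace IsSturmSolution

variable {p q u u' v v' : ℝ → ℝ} {s t : Set ℝ} {a b c : ℝ}

lemma mono (h : IsSturmSolution p u u' s) (hts : t ⊆ s) : IsSturmSolution p u u' t :=
  fun x hx => h x (hts hx)

lemma continuousOn (h : IsSturmSolution p u u' s) : ContinuousOn u s :=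
  fun x hx => (h x hx).1.continuousAt.continuousWithinAt

lemma const_mul (h : IsSturmSolution p u u' s) (σ : ℝ) :
    IsSturmSolution p (fun x => σ * u x) (fun x => σ * u' x) s :=
  fun x hx => ⟨(h x hx).1.const_mul σ, ((h x hx).2.const_mul σ).congr_deriv (by ring)⟩

lemma comp_sub (h : IsSturmSolution p u u' s) (δ : ℝ) (hts : ∀ x ∈ t, x - δ ∈ s) :
    IsSturmSolution (fun x => p (x - δ)) (fun x => u (x - δ)) (fun x => u' (x - δ)) t :=
  fun x hx => ⟨(h _ (hts x hx)).1.comp_sub_const x δ, (h _ (hts x hx)).2.comp_sub_const x δ⟩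

lemma integral_eq_wronskian_sub (hu : IsSturmSolution p u u' (Icc a b))
    (hv : IsSturmSolution q v v' (Icc a b)) (hp : ContinuousOn p (Icc a b))
    (hq : ContinuousOn q (Icc a b)) (hab : a ≤ b) :
    ∫ x in a..b, (q x - p x) * (u x * v x)
      = (u' b * v b - u b * v' b) - (u' a * v a - u a * v' a) := by
  refine integral_eq_sub_of_hasDerivAt (f := fun x => u' x * v x - u x * v' x) (fun x hx => ?_)
    (((hq.sub hp).mul (hu.continuousOn.mul hv.continuousOn)).intervalIntegrable_of_Icc hab)
  rw [uIcc_of_le hab] at hx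
  exact (((hu x hx).2.mul (hv x hx).1).sub ((hu x hx).1.mul (hv x hx).2)).congr_deriv (by ring)

lemma false_of_pos (hu : IsSturmSolution p u u' (Icc a b)) (hv : IsSturmSolution q v v' (Icc a b))
    (hp : ContinuousOn p (Icc a b)) (hq : ContinuousOn q (Icc a b))
    (hpq : ∀ x ∈ Ioo a b, p x < q x) (hab : a < b) (hua : u a = 0) (hub : u b = 0)
    (hu_pos : ∀ x ∈ Ioo a b, 0 < u x) (hv_pos : ∀ x ∈ Ioo a b, 0 < v x) : False := by
  -- The Wronskian `u' v - u v'` increases by `∫ (q - p) u v > 0` from `a` to `b`, yet it is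
  -- `≥ 0` at `a` and `≤ 0` at `b`, where `u` leaves and re-enters zero.
  have ha : a ∈ Icc a b := left_mem_Icc.2 hab.le
  have hb : b ∈ Icc a b := right_mem_Icc.2 hab.le
  have hint : 0 < ∫ x in a..b, (q x - p x) * (u x * v x) := by
    refine intervalIntegral_pos_of_pos_on
      (((hq.sub hp).mul (hu.continuousOn.mul hv.continuousOn)).intervalIntegrable_of_Icc hab.le)
      (fun x hx => ?_) hab
    exact mul_pos (sub_pos.2 (hpq x hx)) (mul_pos (hu_pos x hx) (hv_pos x hx))
  have hu'a := (hu a ha).1.nonneg_of_eq_zero_of_pos hua hab hu_pos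
  have hu'b := (hu b hb).1.nonpos_of_eq_zero_of_pos hub hab hu_pos
  have hva := (hv a ha).1.continuousAt.nonneg_left_of_pos hab hv_pos
  have hvb := (hv b hb).1.continuousAt.nonneg_right_of_pos hab hv_pos
  rw [integral_eq_wronskian_sub hu hv hp hq hab.le, hua, hub] at hint
  nlinarith [mul_nonneg hu'a hva, mul_nonneg (neg_nonneg.2 hu'b) hvb]

/-- The Sturm comparison theorem. -/
theorem exists_zero_of_lt (hu : IsSturmSolution p u u' (Icc a b))
    (hv : IsSturmSolution q v v' (Icc a b)) (hp : ContinuousOn p (Icc a b))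
    (hq : ContinuousOn q (Icc a b)) (hpq : ∀ x ∈ Ioo a b, p x < q x) (hab : a < b)
    (hua : u a = 0) (hub : u b = 0) (hu0 : ∀ x ∈ Ioo a b, u x ≠ 0) :
    ∃ x ∈ Ioo a b, v x = 0 := by
  by_contra! hv0
  obtain ⟨σ, hσ⟩ := isPreconnected_Ioo.exists_mul_pos_of_ne_zero
    (hu.continuousOn.mono Ioo_subset_Icc_self) hu0
  obtain ⟨τ, hτ⟩ := isPreconnected_Ioo.exists_mul_pos_of_ne_zero
    (hv.continuousOn.mono Ioo_subset_Icc_self) hv0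
  exact false_of_pos (hu.const_mul σ) (hv.const_mul τ) hp hq hpq hab (by rw [hua, mul_zero])
    (by rw [hub, mul_zero]) hσ hτ

lemma pi_le_sub (hu : IsSturmSolution p u u' (Icc a b)) (hp : ContinuousOn p (Icc a b))
    (hp1 : ∀ x ∈ Ioo a b, p x ≤ 1) (hab : a < b) (hua : u a = 0) (hub : u b = 0)
    (hu0 : ∀ x ∈ Ioo a b, u x ≠ 0) : π ≤ b - a := by
  by_contra! h
  set k := π / (b - a)
  have hk : 1 < k := (one_lt_div (by linarith)).2 h
  have hkb : k * (b - a) = π := div_mul_cancel₀ _ (by linarith)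
  obtain ⟨x, hx, hsin⟩ := hu.exists_zero_of_lt ((isSturmSolution_sin k a).mono (subset_univ _))
    hp continuousOn_const (fun x hx => (hp1 x hx).trans_lt (by nlinarith)) hab hua hub hu0
  refine (sin_pos_of_pos_of_lt_pi ?_ ?_).ne' hsin
  · nlinarith [hx.1]
  · rw [← hkb]; nlinarith [hx.2]

lemma exists_zero_of_one_lt (hu : IsSturmSolution p u u' (Icc a (a + π)))
    (hp : ContinuousOn p (Icc a (a + π))) (hp1 : ∀ x ∈ Ioo a (a + π), 1 < p x) :
    ∃ x ∈ Ioo a (a + π), u x = 0 := by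
  refine ((isSturmSolution_sin 1 a).mono (subset_univ _)).exists_zero_of_lt hu continuousOn_const
    hp (by simpa using hp1) (by linarith [pi_pos]) (by simp) (by simp) fun x hx => ?_
  exact (sin_pos_of_pos_of_lt_pi (by linarith [hx.1]) (by linarith [hx.2])).ne'

lemma eq_zero_add_pi (hu : IsSturmSolution (fun _ => 1) u u' (Icc a (a + π))) (hua : u a = 0) :
    u (a + π) = 0 := by
  have h := ((isSturmSolution_sin 1 a).mono (subset_univ _)).integral_eq_wronskian_sub hu
    continuousOn_const continuousOn_const (by linarith [pi_pos])
  simp [hua] at h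
  linarith

lemma sub_le_sub_of_strictMonoOn (hu : IsSturmSolution p u u' (Icc a c))
    (hp : ContinuousOn p (Icc a c)) (hmono : StrictMonoOn p (Icc a c)) (hab : a < b)
    (hua : u a = 0) (hub : u b = 0) (hu0ab : ∀ x ∈ Ioo a b, u x ≠ 0)
    (hu0bc : ∀ x ∈ Ioo b c, u x ≠ 0) : c - b ≤ b - a := by
  by_contra! h
  set δ := b - a
  have hsub : Icc b (b + δ) ⊆ Icc a c := Icc_subset_Icc (by linarith) (by linarith)
  have hshift : ∀ x ∈ Icc b (b + δ), x - δ ∈ Icc a c := fun x hx =>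
    ⟨by linarith [hx.1], by linarith [hx.2]⟩
  obtain ⟨x, hx, hux⟩ := (hu.comp_sub δ hshift).exists_zero_of_lt (hu.mono hsub)
    (hp.comp (continuousOn_id.sub continuousOn_const) hshift) (hp.mono hsub)
    (fun x hx => hmono (hshift x (Ioo_subset_Icc_self hx)) (hsub (Ioo_subset_Icc_self hx))
      (by linarith))
    (by linarith) (by simpa [δ] using hua) (by simpa [δ] using hub)
    (fun x hx => hu0ab _ ⟨by linarith [hx.1], by linarith [hx.2]⟩)
  exact hu0bc x ⟨hx.1, by linarith [hx.2]⟩ hux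

lemma sub_le_sub_of_strictAntiOn (hu : IsSturmSolution p u u' (Icc a c))
    (hp : ContinuousOn p (Icc a c)) (hanti : StrictAntiOn p (Icc a c)) (hab : a < b) (hbc : b < c)
    (hub : u b = 0) (huc : u c = 0) (hu0ab : ∀ x ∈ Ioo a b, u x ≠ 0)
    (hu0bc : ∀ x ∈ Ioo b c, u x ≠ 0) : b - a ≤ c - b := by
  by_contra! h
  set δ := b - a
  have hsub : Icc b c ⊆ Icc a c := Icc_subset_Icc hab.le le_rfl
  have hshift : ∀ x ∈ Icc b c, x - δ ∈ Icc a c := fun x hx =>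
    ⟨by linarith [hx.1], by linarith [hx.2]⟩
  obtain ⟨x, hx, hux⟩ := (hu.mono hsub).exists_zero_of_lt (hu.comp_sub δ hshift) (hp.mono hsub)
    (hp.comp (continuousOn_id.sub continuousOn_const) hshift)
    (fun x hx => hanti (hshift x (Ioo_subset_Icc_self hx)) (hsub (Ioo_subset_Icc_self hx))
      (by linarith))
    hbc hub huc hu0bc
  exact hu0ab _ ⟨by linarith [hx.1], by linarith [hx.2]⟩ hux

end IsSturmSolution

/-- Also true at the poles `s ∈ -ℕ`, where Mathlib's `Gamma` takes the junk value `0`; thus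
`(Gamma s)⁻¹` is the entire function `1 / Γ`. -/
lemma Real.inv_Gamma_eq_mul_inv_Gamma_add_one (s : ℝ) :
    (Gamma s)⁻¹ = s * (Gamma (s + 1))⁻¹ := by
  rcases eq_or_ne s 0 with rfl | hs
  · simp [Real.Gamma_zero]
  · rw [Real.Gamma_add_one hs, mul_inv, mul_inv_cancel_left₀ hs]

noncomputable def besselCoeff (ν : ℝ) (m : ℕ) : ℝ :=
  (-1) ^ m / ((Nat.factorial m : ℝ) * Gamma (ν + m + 1))

lemma besselCoeff_eq_neg_mul_succ (ν : ℝ) (m : ℕ) :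
    besselCoeff ν m = -((m + 1) * (ν + m + 1)) * besselCoeff ν (m + 1) := by
  have hΓ := Real.inv_Gamma_eq_mul_inv_Gamma_add_one (ν + m + 1)
  simp only [besselCoeff, div_eq_mul_inv, mul_inv, Nat.factorial_succ, Nat.cast_mul,
    Nat.cast_add, Nat.cast_one, pow_succ, hΓ,
    show ν + ((m : ℝ) + 1) + 1 = ν + m + 1 + 1 by ring]
  field_simp

lemma summable_norm_besselCoeff_mul_pow (ν r : ℝ) :
    Summable fun m => ‖besselCoeff ν m * r ^ m‖ := by
  refine summable_of_ratio_norm_eventually_le (r := 1 / 2) (by norm_num) ?_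
  obtain ⟨N, hN⟩ := exists_nat_ge (2 * |r| + |ν|)
  filter_upwards [eventually_ge_atTop N] with m hm
  have hmN : 2 * |r| + |ν| ≤ m := hN.trans (by exact_mod_cast hm)
  have hK : 2 * |r| ≤ (m + 1) * (ν + m + 1) := by
    nlinarith [neg_abs_le ν, abs_nonneg r]
  rw [norm_norm, norm_norm, besselCoeff_eq_neg_mul_succ ν m, norm_mul, norm_mul, norm_mul,
    norm_neg, norm_pow, norm_pow, pow_succ,
    Real.norm_of_nonneg ((by positivity : (0 : ℝ) ≤ 2 * |r|).trans hK)]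
  have := mul_nonneg (mul_nonneg (norm_nonneg (besselCoeff ν (m + 1)))
    (pow_nonneg (norm_nonneg r) m)) (sub_nonneg.2 hK)
  rw [Real.norm_eq_abs r] at *
  nlinarith

lemma besselCoeff_ode (ν y : ℝ) :
    y * seriesSum (derivCoeff (derivCoeff (besselCoeff ν))) y
      + (ν + 1) * seriesSum (derivCoeff (besselCoeff ν)) y
      + seriesSum (besselCoeff ν) y = 0 := by
  have hc := summable_norm_besselCoeff_mul_pow ν
  have hc' := summable_norm_derivCoeff_mul_pow hc
  have hsum := ((hasSum_natCast_mul_mul_pow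
    (summable_norm_derivCoeff_mul_pow hc' y).of_norm.hasSum).add
    ((hc' y).of_norm.hasSum.mul_left (ν + 1))).add (hc y).of_norm.hasSum
  refine hsum.unique ?_
  convert hasSum_zero with m
  rw [derivCoeff, besselCoeff_eq_neg_mul_succ ν m]
  ring

lemma besselJ_eq (ν : ℝ) {x : ℝ} (hx : 0 < x) :
    besselJ ν x = (x / 2) ^ ν * seriesSum (besselCoeff ν) (x ^ 2 / 4) := by
  rw [besselJ, seriesSum, ← tsum_mul_left]
  refine tsum_congr fun m => ?_
  rw [show 2 * (m : ℝ) + ν = ((2 * m : ℕ) : ℝ) + ν by push_cast; ring,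
    Real.rpow_add (by positivity), Real.rpow_natCast, pow_mul, besselCoeff]
  ring

section Liouville

variable (ν : ℝ)

/-- For `x > 0`, `besselU ν x = 2 ^ ν * √x * J_ν(x)`: the Liouville normal form of Bessel's
equation, `u'' + besselQ ν * u = 0`, has no first-order term. -/
noncomputable def besselU (x : ℝ) : ℝ :=
  x ^ (ν + 1 / 2) * seriesSum (besselCoeff ν) (x ^ 2 / 4)

noncomputable def besselUDeriv (x : ℝ) : ℝ :=
  (ν + 1 / 2) * x ^ (ν - 1 / 2) * seriesSum (besselCoeff ν) (x ^ 2 / 4)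
    + x ^ (ν + 1 / 2) * (x / 2 * seriesSum (derivCoeff (besselCoeff ν)) (x ^ 2 / 4))

noncomputable def besselQ (x : ℝ) : ℝ := 1 + (1 / 4 - ν ^ 2) / x ^ 2

variable {ν}

lemma besselU_eq_zero_iff {x : ℝ} (hx : 0 < x) : besselU ν x = 0 ↔ besselJ ν x = 0 := by
  rw [besselU, besselJ_eq ν hx, mul_eq_zero, mul_eq_zero,
    or_iff_right (Real.rpow_pos_of_pos hx _).ne',
    or_iff_right (Real.rpow_pos_of_pos (by positivity) _).ne']

lemma hasDerivAt_seriesSum_sq_div_four {c : ℕ → ℝ}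
    (hc : ∀ r : ℝ, Summable fun m => ‖c m * r ^ m‖) (x : ℝ) :
    HasDerivAt (fun x => seriesSum c (x ^ 2 / 4))
      (seriesSum (derivCoeff c) (x ^ 2 / 4) * (x / 2)) x :=
  (hasDerivAt_seriesSum hc _).comp x (((hasDerivAt_pow 2 x).div_const 4).congr_deriv (by ring))

lemma hasDerivAt_besselU {x : ℝ} (hx : 0 < x) : HasDerivAt (besselU ν) (besselUDeriv ν x) x :=
  ((Real.hasDerivAt_rpow_const (p := ν + 1 / 2) (Or.inl hx.ne')).mul
    (hasDerivAt_seriesSum_sq_div_four (summable_norm_besselCoeff_mul_pow ν) x)).congr_deriv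
    (by rw [besselUDeriv, show ν + 1 / 2 - 1 = ν - 1 / 2 by ring]; ring)

lemma hasDerivAt_besselUDeriv {x : ℝ} (hx : 0 < x) :
    HasDerivAt (besselUDeriv ν) (-(besselQ ν x * besselU ν x)) x := by
  have hc := summable_norm_besselCoeff_mul_pow ν
  have hG := hasDerivAt_seriesSum_sq_div_four hc x
  have hG' := hasDerivAt_seriesSum_sq_div_four (summable_norm_derivCoeff_mul_pow hc) x
  have hrpow := Real.hasDerivAt_rpow_const (p := ν + 1 / 2) (Or.inl hx.ne')
  have hrpow' := Real.hasDerivAt_rpow_const (p := ν - 1 / 2) (Or.inl hx.ne')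
  have hderiv := ((hrpow'.const_mul (ν + 1 / 2)).mul hG).add
    (hrpow.mul (((hasDerivAt_id' x).div_const 2).mul hG'))
  refine hderiv.congr_deriv ?_
  have hode := besselCoeff_ode ν (x ^ 2 / 4)
  have e1 : x ^ (ν - 1 / 2) = x ^ (ν - 1 / 2 - 1) * x := by
    rw [← Real.rpow_add_one hx.ne', sub_add_cancel]
  have e2 : x ^ (ν + 1 / 2) = x ^ (ν - 1 / 2 - 1) * x * x := by
    rw [← Real.rpow_add_one hx.ne', ← Real.rpow_add_one hx.ne']
    ring_nf
  rw [show ν + 1 / 2 - 1 = ν - 1 / 2 by ring, besselQ, besselU, e1, e2, Pi.mul_apply]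
  field_simp
  linear_combination 16 * x ^ 2 * hode

end Liouville

section BesselPotential

variable {ν : ℝ}

lemma isSturmSolution_besselU (ν : ℝ) :
    IsSturmSolution (besselQ ν) (besselU ν) (besselUDeriv ν) (Ioi 0) :=
  fun _ hx => ⟨hasDerivAt_besselU hx, hasDerivAt_besselUDeriv hx⟩

lemma continuousOn_besselQ (ν : ℝ) : ContinuousOn (besselQ ν) (Ioi 0) :=
  continuousOn_const.add (continuousOn_const.div (continuous_pow 2).continuousOn
    fun _ hx => pow_ne_zero 2 (ne_of_gt hx))

lemma besselQ_le_one (hν : 1 / 4 ≤ ν ^ 2) (x : ℝ) : besselQ ν x ≤ 1 :=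
  add_le_of_nonpos_right (div_nonpos_of_nonpos_of_nonneg (by linarith) (sq_nonneg x))

lemma one_lt_besselQ (hν : ν ^ 2 < 1 / 4) {x : ℝ} (hx : 0 < x) : 1 < besselQ ν x :=
  lt_add_of_pos_right _ (div_pos (by linarith) (by positivity))

lemma besselQ_eq_one (hν : ν ^ 2 = 1 / 4) : besselQ ν = fun _ => 1 := by
  funext x
  simp [besselQ, hν]

lemma strictMonoOn_besselQ (hν : 1 / 4 < ν ^ 2) : StrictMonoOn (besselQ ν) (Ioi 0) := by
  intro x hx y _ hxy
  have : 1 / y ^ 2 < 1 / x ^ 2 := one_div_lt_one_div_of_lt (pow_pos hx 2) (by gcongr; exact hx.le)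
  simp only [besselQ, div_eq_mul_one_div (1 / 4 - ν ^ 2)]
  nlinarith

lemma strictAntiOn_besselQ (hν : ν ^ 2 < 1 / 4) : StrictAntiOn (besselQ ν) (Ioi 0) := by
  intro x hx y _ hxy
  have : 1 / y ^ 2 < 1 / x ^ 2 := one_div_lt_one_div_of_lt (pow_pos hx 2) (by gcongr; exact hx.le)
  simp only [besselQ, div_eq_mul_one_div (1 / 4 - ν ^ 2)]
  nlinarith

end BesselPotential

namespace IsBesselZeroSeq

variable {ν : ℝ} {j : ℕ → ℝ} {n : ℕ}

lemma lt_succ (hj : IsBesselZeroSeq ν j) (hn : 1 ≤ n) : j n < j (n + 1) :=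
  hj.2.1 n (n + 1) hn n.lt_succ_self

lemma succ_le_of_lt (hj : IsBesselZeroSeq ν j) (hn : 1 ≤ n) {x : ℝ} (hx : 0 < x)
    (hJ : besselJ ν x = 0) (hlt : j n < x) : j (n + 1) ≤ x := by
  obtain ⟨m, hm, rfl⟩ := hj.2.2.2 x hx hJ
  have hnm : n < m := by
    by_contra! hmn
    rcases hmn.lt_or_eq with hmn | rfl
    · exact (hj.2.1 m n hm hmn).not_gt hlt
    · exact hlt.false
  rcases (show n + 1 ≤ m from hnm).lt_or_eq with h | rfl
  · exact (hj.2.1 _ _ (by omega) h).le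
  · exact le_rfl

lemma besselU_eq_zero (hj : IsBesselZeroSeq ν j) (hn : 1 ≤ n) : besselU ν (j n) = 0 :=
  (besselU_eq_zero_iff (hj.1 n hn)).2 (hj.2.2.1 n hn)

lemma besselU_ne_zero (hj : IsBesselZeroSeq ν j) (hn : 1 ≤ n) {x : ℝ}
    (hx : x ∈ Ioo (j n) (j (n + 1))) : besselU ν x ≠ 0 := by
  have hx0 : 0 < x := (hj.1 n hn).trans hx.1
  rw [Ne, besselU_eq_zero_iff hx0]
  exact fun hJ => (hj.succ_le_of_lt hn hx0 hJ hx.1).not_gt hx.2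

lemma pi_le_gap (hj : IsBesselZeroSeq ν j) (hν : 1 / 4 ≤ ν ^ 2) (hn : 1 ≤ n) :
    π ≤ j (n + 1) - j n := by
  have hsub : Icc (j n) (j (n + 1)) ⊆ Ioi 0 := fun x hx => (hj.1 n hn).trans_le hx.1
  exact ((isSturmSolution_besselU ν).mono hsub).pi_le_sub ((continuousOn_besselQ ν).mono hsub)
    (fun x _ => besselQ_le_one hν x) (hj.lt_succ hn) (hj.besselU_eq_zero hn)
    (hj.besselU_eq_zero (by omega)) fun _ => hj.besselU_ne_zero hn

lemma gap_le_pi (hj : IsBesselZeroSeq ν j) (hν : ν ^ 2 ≤ 1 / 4) (hn : 1 ≤ n) :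
    j (n + 1) - j n ≤ π := by
  have hsub : Icc (j n) (j n + π) ⊆ Ioi 0 := fun x hx => (hj.1 n hn).trans_le hx.1
  rcases hν.lt_or_eq with hν | hν
  · by_contra! h
    obtain ⟨x, hx, hux⟩ := ((isSturmSolution_besselU ν).mono hsub).exists_zero_of_one_lt
      ((continuousOn_besselQ ν).mono hsub)
      fun x hx => one_lt_besselQ hν (hsub (Ioo_subset_Icc_self hx))
    exact hj.besselU_ne_zero hn ⟨hx.1, by linarith [hx.2]⟩ hux
  · have hsol := isSturmSolution_besselU ν
    rw [besselQ_eq_one hν] at hsol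
    have hpos : 0 < j n + π := hsub ⟨le_add_of_nonneg_right pi_pos.le, le_rfl⟩
    have hzero := (hsol.mono hsub).eq_zero_add_pi (hj.besselU_eq_zero hn)
    linarith [hj.succ_le_of_lt hn hpos ((besselU_eq_zero_iff hpos).1 hzero) (by linarith [pi_pos])]

lemma gap_succ_le_gap (hj : IsBesselZeroSeq ν j) (hν : 1 / 4 ≤ ν ^ 2) (hn : 1 ≤ n) :
    j (n + 2) - j (n + 1) ≤ j (n + 1) - j n := by
  rcases hν.lt_or_eq with hν | hν
  · have hsub : Icc (j n) (j (n + 2)) ⊆ Ioi 0 := fun x hx => (hj.1 n hn).trans_le hx.1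
    exact ((isSturmSolution_besselU ν).mono hsub).sub_le_sub_of_strictMonoOn
      ((continuousOn_besselQ ν).mono hsub) ((strictMonoOn_besselQ hν).mono hsub) (hj.lt_succ hn)
      (hj.besselU_eq_zero hn) (hj.besselU_eq_zero (by omega)) (fun _ => hj.besselU_ne_zero hn)
      fun _ => hj.besselU_ne_zero (by omega)
  · have : j (n + 2) - j (n + 1) ≤ π := hj.gap_le_pi hν.ge (by omega : 1 ≤ n + 1)
    linarith [hj.pi_le_gap hν.le hn]

lemma gap_le_gap_succ (hj : IsBesselZeroSeq ν j) (hν : ν ^ 2 < 1 / 4) (hn : 1 ≤ n) :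
    j (n + 1) - j n ≤ j (n + 2) - j (n + 1) := by
  have hsub : Icc (j n) (j (n + 2)) ⊆ Ioi 0 := fun x hx => (hj.1 n hn).trans_le hx.1
  exact ((isSturmSolution_besselU ν).mono hsub).sub_le_sub_of_strictAntiOn
    ((continuousOn_besselQ ν).mono hsub) ((strictAntiOn_besselQ hν).mono hsub) (hj.lt_succ hn)
    (hj.lt_succ (by omega)) (hj.besselU_eq_zero (by omega)) (hj.besselU_eq_zero (by omega))
    (fun _ => hj.besselU_ne_zero hn) fun _ => hj.besselU_ne_zero (by omega)

end IsBesselZeroSeq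

theorem stmt10 (ν : ℝ) (j : ℕ → ℝ) (hj : IsBesselZeroSeq ν j) :
    ((1 : ℝ) / 2 ≤ |ν| →
      ∀ n, 1 ≤ n → Real.pi ≤ j (n + 1) - j n ∧
        j (n + 2) - j (n + 1) ≤ j (n + 1) - j n) ∧
    (|ν| < 1 / 2 →
      ∀ n, 1 ≤ n → j (n + 1) - j n ≤ Real.pi ∧
        j (n + 1) - j n ≤ j (n + 2) - j (n + 1)) := by
  refine ⟨fun hν n hn => ?_, fun hν n hn => ?_⟩
  · have hν2 : 1 / 4 ≤ ν ^ 2 := by nlinarith [sq_abs ν]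
    exact ⟨hj.pi_le_gap hν2 hn, hj.gap_succ_le_gap hν2 hn⟩
  · have hν2 : ν ^ 2 < 1 / 4 := by nlinarith [sq_abs ν, abs_nonneg ν]
    exact ⟨hj.gap_le_pi hν2.le hn, hj.gap_le_gap_succ hν2 hn⟩
end

section
/- Let w > 0, 0 < a < 1/2, and define φ(x) = x·tan(x(1/2 - a)) - w - √(w² - x²)/tanh(a·√(w² - x²)) for x ∈ (0, w) (restricted to where x(1/2 - a) < π/2). Then φ is strictly increasing on its domain in (0, w). -/
private lemma auxA (u : ℝ) (hu : 0 < u) : u < Real.sinh u * Real.cosh u := by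
  have h := Real.self_lt_sinh_iff.2 (by linarith : (0:ℝ) < 2 * u)
  rw [Real.sinh_two_mul] at h
  linarith

private lemma auxB (a : ℝ) (ha : 0 < a) :
    StrictMonoOn (fun t => t * Real.cosh (a * t) / Real.sinh (a * t)) (Set.Ioi 0) := by
  have hderiv : ∀ t ∈ Set.Ioi (0:ℝ),
      HasDerivAt (fun t => t * Real.cosh (a * t) / Real.sinh (a * t))
        (((1 * Real.cosh (a * t) + t * (Real.sinh (a * t) * a)) * Real.sinh (a * t)
          - t * Real.cosh (a * t) * (Real.cosh (a * t) * a)) / Real.sinh (a * t) ^ 2) t := by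
    intro t ht
    have hat : 0 < a * t := mul_pos ha ht
    have hs : Real.sinh (a * t) ≠ 0 := ne_of_gt (Real.sinh_pos_iff.2 hat)
    have h1 : HasDerivAt (fun t : ℝ => a * t) a t := by
      simpa using (hasDerivAt_id t).const_mul a
    have hsinh : HasDerivAt (fun t : ℝ => Real.sinh (a * t)) (Real.cosh (a * t) * a) t :=
      (Real.hasDerivAt_sinh (a * t)).comp t h1
    have hcosh : HasDerivAt (fun t : ℝ => Real.cosh (a * t)) (Real.sinh (a * t) * a) t :=
      (Real.hasDerivAt_cosh (a * t)).comp t h1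
    exact ((hasDerivAt_id t).mul hcosh).div hsinh hs
  apply strictMonoOn_of_deriv_pos (convex_Ioi 0)
  · intro t ht
    exact (hderiv t ht).continuousAt.continuousWithinAt
  · intro t ht
    rw [interior_Ioi] at ht
    rw [(hderiv t ht).deriv]
    have hat : 0 < a * t := mul_pos ha ht
    have hs : 0 < Real.sinh (a * t) := Real.sinh_pos_iff.2 hat
    have hA := auxA (a * t) hat
    have hsq := Real.cosh_sq (a * t)
    apply div_pos
    · nlinarith
    · positivity

theorem stmt14 (w a : ℝ) (hw : 0 < w) (ha : 0 < a) (ha' : a < 1 / 2) (φ : ℝ → ℝ)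
    (hφ : ∀ x, φ x = x * Real.tan (x * (1 / 2 - a)) - w
        - Real.sqrt (w ^ 2 - x ^ 2) / Real.tanh (a * Real.sqrt (w ^ 2 - x ^ 2))) :
    StrictMonoOn φ {x : ℝ | 0 < x ∧ x < w ∧ x * (1 / 2 - a) < Real.pi / 2} := by
  intro x hx y hy hxy
  obtain ⟨hx0, hxw, hxp⟩ := hx
  obtain ⟨hy0, hyw, hyp⟩ := hy
  set c : ℝ := 1 / 2 - a with hc
  have hcpos : 0 < c := by simp [hc]; linarith
  -- tan part
  have hxc : 0 < x * c := mul_pos hx0 hcpos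
  have hyc : 0 < y * c := mul_pos hy0 hcpos
  have hxyc : x * c < y * c := by nlinarith
  have htan : x * Real.tan (x * c) < y * Real.tan (y * c) := by
    have htx : 0 < Real.tan (x * c) :=
      Real.tan_pos_of_pos_of_lt_pi_div_two hxc (by linarith)
    have hmt : Real.tan (x * c) < Real.tan (y * c) :=
      Real.tan_lt_tan_of_nonneg_of_lt_pi_div_two (le_of_lt hxc) hyp hxyc
    nlinarith
  -- sqrt part
  have hx2 : 0 < w ^ 2 - x ^ 2 := by nlinarith
  have hy2 : 0 < w ^ 2 - y ^ 2 := by nlinarith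
  set tx : ℝ := Real.sqrt (w ^ 2 - x ^ 2) with htxdef
  set ty : ℝ := Real.sqrt (w ^ 2 - y ^ 2) with htydef
  have htxpos : 0 < tx := Real.sqrt_pos.2 hx2
  have htypos : 0 < ty := Real.sqrt_pos.2 hy2
  have htyx : ty < tx := by
    apply Real.sqrt_lt_sqrt (le_of_lt hy2)
    nlinarith
  have hg := auxB a ha htypos (Set.mem_Ioi.2 htxpos) htyx
  -- rewrite tanh as sinh/cosh
  have hrw : ∀ t : ℝ, 0 < t → t / Real.tanh (a * t) = t * Real.cosh (a * t) / Real.sinh (a * t) := by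
    intro t ht
    have hat : 0 < a * t := mul_pos ha ht
    have hs : Real.sinh (a * t) ≠ 0 := ne_of_gt (Real.sinh_pos_iff.2 hat)
    have hcne : Real.cosh (a * t) ≠ 0 := ne_of_gt (Real.cosh_pos _)
    rw [Real.tanh_eq_sinh_div_cosh]
    field_simp
  rw [hφ x, hφ y, hrw tx htxpos, hrw ty htypos]
  simp only at hg
  linarith
end

section
/- Let h : [0,1] → ℝ be measurable with 0 ≤ h ≤ A and ‖h‖_{L¹(0,1)} ≥ K > 0. Define μ₁(h) = inf over u ∈ H¹(0,1) with ∫₀¹ u·h = 0, u ≠ 0 of (∫₀¹ (u')²h)/(∫₀¹ u²h). Then taking the test function φ(x) = x - (∫₀¹ t·h(t)dt)/(∫₀¹ h(t)dt) yields the explicit bound μ₁(h) ≤ (∫₀¹ h)³ / ∫₀¹ (x·∫₀¹ h(t)dt - ∫₀¹ t·h(t)dt)²·h(x)dx, and in particular μ₁(h) ≤ C(K,A) for some constant depending only on K and A. -/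
/-!
With `M = ∫ h` and `T = ∫ t h(t)`, the affine function `φ(x) = x M - T` is `h`-orthogonal to
constants and has Rayleigh quotient `M³ / ∫ φ² h`. Since `φ(x) = M (x - c)` with `c = T / M`, the
denominator is `M²` times the second moment of `h` about `c`. A weight bounded by `A` puts mass at
most `2εA` on `[c - ε, c + ε]`, so this moment is at least `ε² (M - 2εA)`; the choice
`ε = K / (4A)` makes it at least `ε² M / 2`, whence `μ₁(h) ≤ 2 / ε² = 32 A² / K²`.
-/

/-- The Rayleigh quotient with weight `h` of a function `u` on `(0,1)`. -/
noncomputable def rayleigh (h u : ℝ → ℝ) : ℝ :=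
  (∫ x in (0:ℝ)..1, (deriv u x) ^ 2 * h x) / (∫ x in (0:ℝ)..1, (u x) ^ 2 * h x)

/-- The relaxed first Sturm–Liouville eigenvalue with weight `h`:
infimum of Rayleigh quotients over (smooth representatives of) functions
orthogonal to `h` in `L²(0,1)`. -/
noncomputable def mu1 (h : ℝ → ℝ) : ℝ :=
  sInf {r | ∃ u : ℝ → ℝ, ContDiffOn ℝ 1 u (Set.Icc 0 1) ∧
    (∫ x in (0:ℝ)..1, u x * h x) = 0 ∧
    (∫ x in (0:ℝ)..1, (u x) ^ 2 * h x) ≠ 0 ∧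
    r = rayleigh h u}

open MeasureTheory Set

theorem intervalIntegrable_of_norm_le {E : Type*} [NormedAddCommGroup E] {f : ℝ → E}
    {a b C : ℝ} (hab : a ≤ b) (hf : AEStronglyMeasurable f volume)
    (hC : ∀ x ∈ Icc a b, ‖f x‖ ≤ C) : IntervalIntegrable f volume a b := by
  rw [intervalIntegrable_iff_integrableOn_Ioc_of_le hab]
  refine IntegrableOn.of_bound measure_Ioc_lt_top hf.restrict C ?_
  filter_upwards [ae_restrict_mem measurableSet_Ioc] with x hx
  exact hC x (Ioc_subset_Icc_self hx)

theorem sq_mul_sub_le_integral_sq_sub_mul {h : ℝ → ℝ} {a b A c ε : ℝ} (hab : a ≤ b)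
    (hε : 0 ≤ ε) (hA : 0 ≤ A) (hh : IntervalIntegrable h volume a b)
    (hbd : ∀ x ∈ Icc a b, 0 ≤ h x ∧ h x ≤ A) :
    ε ^ 2 * ((∫ x in a..b, h x) - 2 * ε * A) ≤ ∫ x in a..b, (x - c) ^ 2 * h x := by
  set I := Metric.closedBall c ε
  have hI : MeasurableSet I := measurableSet_closedBall
  have hpointwise : ∀ x ∈ Icc a b,
      ε ^ 2 * h x - ε ^ 2 * A * I.indicator 1 x ≤ (x - c) ^ 2 * h x := by
    intro x hx
    obtain ⟨h_nonneg, h_le⟩ := hbd x hx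
    by_cases hxI : x ∈ I
    · rw [indicator_of_mem hxI, Pi.one_apply, mul_one]
      nlinarith [sq_nonneg ε, sq_nonneg (x - c)]
    · have hfar : ε < |x - c| := by simpa [I, Real.dist_eq] using hxI
      rw [indicator_of_notMem hxI, mul_zero, sub_zero]
      have : ε ^ 2 ≤ (x - c) ^ 2 := by nlinarith [sq_abs (x - c)]
      exact mul_le_mul_of_nonneg_right this h_nonneg
  have hind_int : IntervalIntegrable (I.indicator 1) volume a b :=
    intervalIntegrable_of_norm_le hab (aestronglyMeasurable_const.indicator hI) fun x _ =>
      norm_indicator_le_norm_self (fun _ => (1 : ℝ)) x |>.trans_eq norm_one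
  have hind : ∫ x in a..b, I.indicator (1 : ℝ → ℝ) x ≤ 2 * ε := calc
    ∫ x in a..b, I.indicator (1 : ℝ → ℝ) x = volume.real (I ∩ Ioc a b) := by
      rw [intervalIntegral.integral_of_le hab, integral_indicator_one hI,
        measureReal_restrict_apply hI]
    _ ≤ volume.real I := measureReal_mono inter_subset_left measure_closedBall_lt_top.ne
    _ = 2 * ε := Real.volume_real_closedBall hε
  calc ε ^ 2 * ((∫ x in a..b, h x) - 2 * ε * A)
      ≤ ε ^ 2 * (∫ x in a..b, h x) - ε ^ 2 * A * ∫ x in a..b, I.indicator 1 x := by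
        nlinarith [mul_le_mul_of_nonneg_left hind (mul_nonneg (sq_nonneg ε) hA)]
    _ = ∫ x in a..b, (ε ^ 2 * h x - ε ^ 2 * A * I.indicator 1 x) := by
        rw [intervalIntegral.integral_sub (hh.const_mul _) (hind_int.const_mul _),
          intervalIntegral.integral_const_mul, intervalIntegral.integral_const_mul]
    _ ≤ ∫ x in a..b, (x - c) ^ 2 * h x :=
        intervalIntegral.integral_mono_on hab ((hh.const_mul _).sub (hind_int.const_mul _))
          (hh.continuousOn_mul (by fun_prop)) hpointwise

theorem integral_mul_integral_sub_mul_eq_zero {h : ℝ → ℝ} {a b : ℝ}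
    (hh : IntervalIntegrable h volume a b) :
    ∫ x in a..b, (x * (∫ t in a..b, h t) - ∫ t in a..b, t * h t) * h x = 0 := by
  simp_rw [sub_mul, mul_right_comm _ _ (h _)]
  rw [intervalIntegral.integral_sub (hh.continuousOn_mul (by fun_prop) |>.mul_const _)
      (hh.const_mul _), intervalIntegral.integral_mul_const,
    intervalIntegral.integral_const_mul, mul_comm, sub_self]

theorem rayleigh_nonneg {h : ℝ → ℝ} (h_nonneg : ∀ x ∈ Icc (0:ℝ) 1, 0 ≤ h x) (u : ℝ → ℝ) :
    0 ≤ rayleigh h u := by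
  have (f : ℝ → ℝ) : 0 ≤ ∫ x in (0:ℝ)..1, f x ^ 2 * h x :=
    intervalIntegral.integral_nonneg zero_le_one fun x hx =>
      mul_nonneg (sq_nonneg _) (h_nonneg x hx)
  exact div_nonneg (this _) (this _)

theorem mu1_le_rayleigh {h u : ℝ → ℝ} (h_nonneg : ∀ x ∈ Icc (0:ℝ) 1, 0 ≤ h x)
    (hu : ContDiffOn ℝ 1 u (Icc 0 1)) (horth : ∫ x in (0:ℝ)..1, u x * h x = 0)
    (hden : ∫ x in (0:ℝ)..1, (u x) ^ 2 * h x ≠ 0) : mu1 h ≤ rayleigh h u :=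
  csInf_le ⟨0, by rintro r ⟨v, -, -, -, rfl⟩; exact rayleigh_nonneg h_nonneg v⟩
    ⟨u, hu, horth, hden, rfl⟩

theorem rayleigh_mul_sub (h : ℝ → ℝ) (m t : ℝ) :
    rayleigh h (fun x => x * m - t) =
      m ^ 2 * (∫ x in (0:ℝ)..1, h x) / ∫ x in (0:ℝ)..1, (x * m - t) ^ 2 * h x := by
  simp [rayleigh, intervalIntegral.integral_const_mul]

theorem mu1_le_cube_integral_div {h : ℝ → ℝ} (hh : IntervalIntegrable h volume 0 1)
    (h_nonneg : ∀ x ∈ Icc (0:ℝ) 1, 0 ≤ h x)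
    (hden : ∫ x in (0:ℝ)..1,
      (x * (∫ t in (0:ℝ)..1, h t) - ∫ t in (0:ℝ)..1, t * h t) ^ 2 * h x ≠ 0) :
    mu1 h ≤ (∫ x in (0:ℝ)..1, h x) ^ 3 / ∫ x in (0:ℝ)..1,
      (x * (∫ t in (0:ℝ)..1, h t) - ∫ t in (0:ℝ)..1, t * h t) ^ 2 * h x := by
  refine (mu1_le_rayleigh h_nonneg (by fun_prop) (integral_mul_integral_sub_mul_eq_zero hh)
    hden).trans_eq ?_
  rw [rayleigh_mul_sub]
  ring

theorem stmt16 (K A : ℝ) (hK : 0 < K) (hKA : K ≤ A) :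
    ∃ C : ℝ, ∀ h : ℝ → ℝ, Measurable h →
      (∀ x ∈ Set.Icc (0:ℝ) 1, 0 ≤ h x ∧ h x ≤ A) →
      K ≤ (∫ x in (0:ℝ)..1, h x) →
      mu1 h ≤ (∫ x in (0:ℝ)..1, h x) ^ 3 /
          (∫ x in (0:ℝ)..1,
            (x * (∫ t in (0:ℝ)..1, h t) - ∫ t in (0:ℝ)..1, t * h t) ^ 2 * h x) ∧
      mu1 h ≤ C := by
  have hA : 0 < A := hK.trans_le hKA
  set ε := K / (4 * A) with hε_def
  have hε : 0 < ε := by positivity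
  refine ⟨2 / ε ^ 2, fun h hmeas hbd hKM => ?_⟩
  set M := ∫ x in (0:ℝ)..1, h x
  set T := ∫ t in (0:ℝ)..1, t * h t
  have hM : 0 < M := hK.trans_le hKM
  have hh : IntervalIntegrable h volume 0 1 :=
    intervalIntegrable_of_norm_le (C := A) zero_le_one hmeas.aestronglyMeasurable fun x hx => by
      rw [Real.norm_eq_abs, abs_le]; constructor <;> linarith [hbd x hx]
  have hmoment : ε ^ 2 * (M / 2) ≤ ∫ x in (0:ℝ)..1, (x - T / M) ^ 2 * h x := by
    refine le_trans ?_ (sq_mul_sub_le_integral_sq_sub_mul zero_le_one hε.le hA.le hh hbd)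
    have : 2 * ε * A = K / 2 := by rw [hε_def]; field_simp; ring
    rw [this]; gcongr; linarith
  have hden : ∫ x in (0:ℝ)..1, (x * M - T) ^ 2 * h x =
      M ^ 2 * ∫ x in (0:ℝ)..1, (x - T / M) ^ 2 * h x := by
    rw [← intervalIntegral.integral_const_mul]
    congr 1 with x
    field_simp
  have hden_pos : 0 < ∫ x in (0:ℝ)..1, (x * M - T) ^ 2 * h x := by
    rw [hden]
    exact mul_pos (pow_pos hM 2) (hmoment.trans_lt' (mul_pos (pow_pos hε 2) (half_pos hM)))
  have hmu := mu1_le_cube_integral_div hh (fun x hx => (hbd x hx).1) hden_pos.ne'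
  refine ⟨hmu, hmu.trans ?_⟩
  rw [div_le_div_iff₀ hden_pos (by positivity), hden]
  nlinarith [mul_le_mul_of_nonneg_left hmoment (sq_nonneg M), pow_pos hM 3]
end

section
/- Let Ω ⊂ ℝ^d be a bounded Lipschitz domain with diameter 1 placed so a diameter lies along the x₁-axis, and let h be its profile function h(x₁) = H^{d-1}({x' : (x₁,x') ∈ Ω}). Then for every k ≥ 1, μ_k(Ω) ≤ μ_k(h), where μ_k(Ω) is the k-th nonzero Neumann eigenvalue of the Laplacian on Ω and μ_k(h) is the relaxed Sturm–Liouville eigenvalue with weight h. -/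
/-!
A function `u` on `[0,1]` lifts to `u ∘ Prod.fst` on `Ω`. Since `Ω` projects into `[0,1]`,
Fubini gives `∫_Ω F(x₁) dx = ∫₀¹ F h` for every `F`, and `|∇(u ∘ Prod.fst)| = |u'|`; hence the
lift keeps both Rayleigh quotients and orthogonality (to `h`, resp. to constants). Every
`k`-dimensional subspace admissible for `μ_k(h)` thus lifts injectively to one admissible for
`μ_k(Ω)` with the same maximal Rayleigh quotient, and the infimum over the larger family is
smaller. The family for `μ_k(h)` is nonempty, since the polynomials of degree at most `k`
orthogonal to `h` already form a space of dimension at least `k`.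
-/
open MeasureTheory

/-- The Rayleigh quotient with weight `h` of a function `u` on `(0,1)`. -/
noncomputable def rayleigh1D (h u : ℝ → ℝ) : ℝ :=
  (∫ x in (0:ℝ)..1, (deriv u x) ^ 2 * h x) / (∫ x in (0:ℝ)..1, (u x) ^ 2 * h x)

/-- The relaxed `k`-th Sturm–Liouville eigenvalue with weight `h`: min-max of
Rayleigh quotients over `k`-dimensional subspaces of (smooth representatives of)
`H¹(0,1)` that are `L²`-orthogonal to `h`. -/
noncomputable def muk1D (k : ℕ) (h : ℝ → ℝ) : ℝ :=
  sInf {r | ∃ E : Submodule ℝ (ℝ → ℝ), Module.finrank ℝ E = k ∧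
    (∀ u ∈ E, ContDiffOn ℝ 1 u (Set.Icc 0 1) ∧ (∫ x in (0:ℝ)..1, u x * h x) = 0) ∧
    r = sSup {s | ∃ u ∈ E, u ≠ 0 ∧ s = rayleigh1D h u}}

/-- The Rayleigh quotient of `u` on a domain `Ω ⊆ ℝ × ℝ^m`. -/
noncomputable def rayleighD {m : ℕ} (Ω : Set (ℝ × (Fin m → ℝ)))
    (u : (ℝ × (Fin m → ℝ)) → ℝ) : ℝ :=
  (∫ x in Ω, ‖fderiv ℝ u x‖ ^ 2) / (∫ x in Ω, (u x) ^ 2)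

/-- The `k`-th nonzero Neumann eigenvalue of the Laplacian on `Ω`, via the
min-max characterization over `k`-dimensional subspaces of (smooth
representatives of) `H¹(Ω)` orthogonal to constants. -/
noncomputable def mukNeumann {m : ℕ} (k : ℕ) (Ω : Set (ℝ × (Fin m → ℝ))) : ℝ :=
  sInf {r | ∃ E : Submodule ℝ ((ℝ × (Fin m → ℝ)) → ℝ), Module.finrank ℝ E = k ∧
    (∀ u ∈ E, ContDiffOn ℝ 1 u (closure Ω) ∧ (∫ x in Ω, u x) = 0) ∧
    r = sSup {s | ∃ u ∈ E, u ≠ 0 ∧ s = rayleighD Ω u}}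

open Set

namespace MeasureTheory

section Slices

variable {α β E : Type*} [MeasurableSpace α] [MeasurableSpace β]
  [NormedAddCommGroup E] [NormedSpace ℝ E]
  {μ : Measure α} {ν : Measure β} [SFinite ν] {s : Set (α × β)}

theorem Measure.map_fst_restrict_eq_withDensity (hs : MeasurableSet s) :
    ((μ.prod ν).restrict s).map Prod.fst = μ.withDensity fun x => ν (Prod.mk x ⁻¹' s) := by
  ext t ht
  rw [Measure.map_apply measurable_fst ht, Measure.restrict_apply (measurable_fst ht),
    Measure.prod_apply (measurable_fst ht |>.inter hs), withDensity_apply _ ht,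
    ← lintegral_indicator ht]
  refine lintegral_congr fun x => ?_
  by_cases hx : x ∈ t <;> simp [hx, preimage]

theorem setIntegral_comp_fst [SFinite μ] (hs : MeasurableSet s) (hfin : (μ.prod ν) s ≠ ⊤)
    {g : α → E} (hg : AEStronglyMeasurable g μ) :
    ∫ p in s, g p.1 ∂μ.prod ν = ∫ x, ν.real (Prod.mk x ⁻¹' s) • g x ∂μ := by
  have hmap := Measure.map_fst_restrict_eq_withDensity (μ := μ) (ν := ν) hs
  rw [← integral_map measurable_fst.aemeasurable
      (hmap ▸ hg.mono_ac (withDensity_absolutelyContinuous _ _)), hmap,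
    integral_withDensity_eq_integral_toReal_smul (measurable_measure_prodMk_left hs)
      (Measure.ae_measure_lt_top hs hfin)]
  rfl

end Slices

end MeasureTheory

theorem norm_fderiv_comp_fst {𝕜 E F G : Type*} [NontriviallyNormedField 𝕜]
    [NormedAddCommGroup E] [NormedSpace 𝕜 E] [NormedAddCommGroup F] [NormedSpace 𝕜 F]
    [NormedAddCommGroup G] [NormedSpace 𝕜 G] (f : E → G) (p : E × F) :
    ‖fderiv 𝕜 (fun q : E × F => f q.1) p‖ = ‖fderiv 𝕜 f p.1‖ := by
  by_cases hf : DifferentiableAt 𝕜 f p.1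
  · rw [show (fun q : E × F => f q.1) = f ∘ Prod.fst from rfl,
      fderiv_comp p hf differentiableAt_fst, fderiv_fst]
    refine le_antisymm ?_ ?_
    · simpa using (fderiv 𝕜 f p.1).opNorm_comp_le (ContinuousLinearMap.fst 𝕜 E F) |>.trans
        (mul_le_of_le_one_right (norm_nonneg _) (ContinuousLinearMap.norm_fst_le 𝕜 E F))
    · have := ((fderiv 𝕜 f p.1).comp (ContinuousLinearMap.fst 𝕜 E F)).opNorm_comp_le
        (ContinuousLinearMap.inl 𝕜 E F)
      rw [show ((fderiv 𝕜 f p.1).comp (ContinuousLinearMap.fst 𝕜 E F)).comp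
        (ContinuousLinearMap.inl 𝕜 E F) = fderiv 𝕜 f p.1 by ext; simp] at this
      exact this.trans (mul_le_of_le_one_right (norm_nonneg _)
        (ContinuousLinearMap.norm_inl_le_one 𝕜 E F))
  · have hf' : ¬ DifferentiableAt 𝕜 (fun q : E × F => f q.1) p := fun h =>
      hf (h.comp (g := fun q : E × F => f q.1) p.1 (differentiableAt_id.prodMk
        (differentiableAt_const p.2) : DifferentiableAt 𝕜 (fun x : E => (x, p.2)) p.1) :)
    rw [fderiv_zero_of_not_differentiableAt hf, fderiv_zero_of_not_differentiableAt hf',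
      norm_zero, norm_zero]

noncomputable def profile {m : ℕ} (Ω : Set (ℝ × (Fin m → ℝ))) (x : ℝ) : ℝ :=
  (volume {y : Fin m → ℝ | (x, y) ∈ Ω}).toReal

section Profile

variable {m : ℕ} {Ω : Set (ℝ × (Fin m → ℝ))}

theorem intervalIntegrable_profile (hΩ : MeasurableSet Ω) (hfin : volume Ω ≠ ⊤) (a b : ℝ) :
    IntervalIntegrable (profile Ω) volume a b := by
  rw [Measure.volume_eq_prod] at hfin
  exact (Measure.integrable_measure_prodMk_left hΩ hfin).intervalIntegrable

theorem setIntegral_comp_fst_eq_intervalIntegral_mul_profile (hΩ : MeasurableSet Ω)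
    (hfin : volume Ω ≠ ⊤) {a b : ℝ} (hab : a ≤ b) (hproj : ∀ p ∈ Ω, p.1 ∈ Icc a b) {g : ℝ → ℝ}
    (hg : AEStronglyMeasurable g (volume.restrict (Icc a b))) :
    ∫ p in Ω, g p.1 = ∫ x in a..b, g x * profile Ω x := by
  have hΩg : ∫ p in Ω, g p.1 = ∫ p in Ω, (Icc a b).indicator g p.1 :=
    setIntegral_congr_fun hΩ fun p hp => (indicator_of_mem (hproj p hp) g).symm
  rw [Measure.volume_eq_prod] at hfin
  rw [hΩg, Measure.volume_eq_prod, setIntegral_comp_fst hΩ hfin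
      ((aestronglyMeasurable_indicator_iff measurableSet_Icc).2 hg),
    intervalIntegral.integral_of_le hab, ← integral_Icc_eq_integral_Ioc,
    ← integral_indicator measurableSet_Icc]
  refine integral_congr_ae (Filter.Eventually.of_forall fun x => ?_)
  by_cases hx : x ∈ Icc a b <;> simp [hx, profile, mul_comm, Measure.real, preimage]

theorem rayleighD_comp_fst (hΩ : MeasurableSet Ω) (hfin : volume Ω ≠ ⊤)
    (hproj : ∀ p ∈ Ω, p.1 ∈ Icc (0 : ℝ) 1) {u : ℝ → ℝ} (hu : ContinuousOn u (Icc 0 1)) :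
    rayleighD Ω (fun p => u p.1) = rayleigh1D (profile Ω) u := by
  have hgrad : ∀ p, ‖fderiv ℝ (fun q : ℝ × (Fin m → ℝ) => u q.1) p‖ ^ 2 = deriv u p.1 ^ 2 :=
    fun p => by rw [norm_fderiv_comp_fst, ← norm_deriv_eq_norm_fderiv, Real.norm_eq_abs, sq_abs]
  simp only [rayleighD, rayleigh1D, hgrad]
  rw [setIntegral_comp_fst_eq_intervalIntegral_mul_profile hΩ hfin zero_le_one hproj
      (g := fun x => deriv u x ^ 2) ((measurable_deriv u).pow_const 2).aestronglyMeasurable,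
    setIntegral_comp_fst_eq_intervalIntegral_mul_profile hΩ hfin zero_le_one hproj
      (g := fun x => u x ^ 2) ((hu.pow 2).aestronglyMeasurable measurableSet_Icc)]

theorem contDiffOn_comp_fst_and_setIntegral_eq_zero (hΩ : MeasurableSet Ω)
    (hfin : volume Ω ≠ ⊤) (hproj : ∀ p ∈ Ω, p.1 ∈ Icc (0 : ℝ) 1) {u : ℝ → ℝ}
    (hu : ContDiffOn ℝ 1 u (Icc 0 1)) (horth : ∫ x in (0 : ℝ)..1, u x * profile Ω x = 0) :
    ContDiffOn ℝ 1 (fun p : ℝ × (Fin m → ℝ) => u p.1) (closure Ω) ∧ ∫ p in Ω, u p.1 = 0 := by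
  have hclosure : closure Ω ⊆ Prod.fst ⁻¹' Icc 0 1 :=
    closure_minimal hproj (isClosed_Icc.preimage continuous_fst)
  refine ⟨hu.comp contDiff_fst.contDiffOn hclosure, ?_⟩
  rwa [setIntegral_comp_fst_eq_intervalIntegral_mul_profile hΩ hfin zero_le_one hproj
    (hu.continuousOn.aestronglyMeasurable measurableSet_Icc)]

end Profile

theorem Submodule.exists_le_finrank_eq {K V : Type*} [DivisionRing K] [AddCommGroup V]
    [Module K V] (N : Submodule K V) {n : ℕ}
    (hn : n ≤ Module.finrank K N) :
    ∃ W ≤ N, Module.finrank K W = n := by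
  obtain ⟨s, hcard, hs⟩ := exists_finset_linearIndependent_of_le_finrank hn
  refine ⟨(Submodule.span K (s : Set N)).map N.subtype, N.map_subtype_le _, ?_⟩
  rw [(Submodule.equivMapOfInjective _ N.injective_subtype _).symm.finrank_eq,
    finrank_span_set_eq_card hs, Finset.toFinset_coe, hcard]

theorem LinearMap.exists_le_ker_finrank_eq {K V : Type*} [Field K] [AddCommGroup V]
    [Module K V] [FiniteDimensional K V] (φ : V →ₗ[K] K) {n : ℕ}
    (hn : n + 1 ≤ Module.finrank K V) :
    ∃ W ≤ LinearMap.ker φ, Module.finrank K W = n := by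
  refine (LinearMap.ker φ).exists_le_finrank_eq ?_
  have := φ.finrank_range_add_finrank_ker
  have := (LinearMap.range φ).finrank_le
  rw [Module.finrank_self] at this
  omega

theorem exists_polynomial_subspace_intervalIntegral_mul_eq_zero {h : ℝ → ℝ} {a b : ℝ}
    (hh : IntervalIntegrable h volume a b) (n : ℕ) :
    ∃ E : Submodule ℝ (ℝ → ℝ), Module.finrank ℝ E = n ∧
      ∀ u ∈ E, ContDiff ℝ 1 u ∧ ∫ x in a..b, u x * h x = 0 := by
  have hint (P : Polynomial ℝ) : IntervalIntegrable (fun x => P.eval x * h x) volume a b :=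
    hh.continuousOn_mul P.continuous.continuousOn
  have hsmooth (P : Polynomial ℝ) : ContDiff ℝ 1 fun x => P.eval x := by
    simpa using P.contDiff_aeval (𝕜 := ℝ) 1
  let φ : Polynomial ℝ →ₗ[ℝ] ℝ :=
    { toFun := fun P => ∫ x in a..b, P.eval x * h x
      map_add' := fun P Q => by
        simp only [Polynomial.eval_add, add_mul]
        exact intervalIntegral.integral_add (hint P) (hint Q)
      map_smul' := fun c P => by
        simp only [Polynomial.eval_smul, smul_eq_mul, mul_assoc, RingHom.id_apply]
        exact intervalIntegral.integral_const_mul c _ }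
  let ev : Polynomial ℝ →ₗ[ℝ] ℝ → ℝ := LinearMap.pi Polynomial.leval
  let V := Polynomial.degreeLT ℝ (n + 1)
  have hV : Module.finrank ℝ V = n + 1 :=
    (Polynomial.degreeLTEquiv ℝ (n + 1)).finrank_eq.trans (Module.finrank_fin_fun ℝ)
  have hinj : Function.Injective (ev ∘ₗ V.subtype) := fun P Q hPQ =>
    Subtype.ext (Polynomial.funext (congrFun hPQ))
  obtain ⟨W, hWker, hW⟩ := (φ.domRestrict V).exists_le_ker_finrank_eq hV.ge
  refine ⟨W.map (ev ∘ₗ V.subtype), ?_, ?_⟩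
  · rw [← (Submodule.equivMapOfInjective _ hinj W).finrank_eq, hW]
  · rintro _ ⟨P, hP, rfl⟩
    exact ⟨hsmooth P.1, hWker hP⟩

theorem rayleighD_nonneg {m : ℕ} (Ω : Set (ℝ × (Fin m → ℝ))) (u : (ℝ × (Fin m → ℝ)) → ℝ) :
    0 ≤ rayleighD Ω u :=
  div_nonneg (integral_nonneg fun _ => by positivity) (integral_nonneg fun _ => sq_nonneg _)

theorem setOf_exists_mem_map_eq {R M N α : Type*} [Semiring R] [AddCommMonoid M]
    [AddCommMonoid N] [Module R M] [Module R N] {L : M →ₗ[R] N} (hL : Function.Injective L)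
    {E : Submodule R M} {f : M → α} {g : N → α} (hfg : ∀ u ∈ E, g (L u) = f u) :
    {s | ∃ v ∈ E.map L, v ≠ 0 ∧ s = g v} = {s | ∃ u ∈ E, u ≠ 0 ∧ s = f u} := by
  ext s
  constructor
  · rintro ⟨_, ⟨u, hu, rfl⟩, hne, rfl⟩
    exact ⟨u, hu, (map_ne_zero_iff L hL).1 hne, hfg u hu⟩
  · rintro ⟨u, hu, hne, rfl⟩
    exact ⟨L u, ⟨u, hu, rfl⟩, (map_ne_zero_iff L hL).2 hne, (hfg u hu).symm⟩

theorem stmt19_general (d : ℕ) (Ω : Set (ℝ × (Fin (d - 1) → ℝ)))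
    (hopen : IsOpen Ω) (hbdd : Bornology.IsBounded Ω)
    (hproj : ∀ p ∈ Ω, p.1 ∈ Set.Icc (0:ℝ) 1)
    (h : ℝ → ℝ)
    (hh : ∀ x, h x = (volume {y : Fin (d - 1) → ℝ | (x, y) ∈ Ω}).toReal) :
    ∀ k : ℕ, 1 ≤ k → mukNeumann k Ω ≤ muk1D k h := by
  intro k _
  obtain rfl : h = profile Ω := funext hh
  have hΩ := hopen.measurableSet
  have hfin : volume Ω ≠ ⊤ := hbdd.measure_lt_top.ne
  let L := LinearMap.funLeft ℝ ℝ (Prod.fst : ℝ × (Fin (d - 1) → ℝ) → ℝ)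
  have hL : Function.Injective L :=
    LinearMap.funLeft_injective_of_surjective _ _ _ Prod.fst_surjective
  -- `sInf ∅ = 0`, so the one-dimensional competitors have to be shown to exist.
  refine csInf_le_csInf ⟨0, ?_⟩ ?_ ?_
  · rintro _ ⟨E, -, -, rfl⟩
    exact Real.sSup_nonneg fun _ ⟨u, _, _, hs⟩ => hs ▸ rayleighD_nonneg Ω u
  · obtain ⟨E, hE, hmem⟩ := exists_polynomial_subspace_intervalIntegral_mul_eq_zero
      (intervalIntegrable_profile hΩ hfin 0 1) k
    exact ⟨_, E, hE, fun u hu => ⟨(hmem u hu).1.contDiffOn, (hmem u hu).2⟩, rfl⟩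
  · rintro _ ⟨E, hE, hmem, rfl⟩
    refine ⟨E.map L, ?_, ?_, ?_⟩
    · rw [← (Submodule.equivMapOfInjective _ hL E).finrank_eq, hE]
    · rintro _ ⟨u, hu, rfl⟩
      exact contDiffOn_comp_fst_and_setIntegral_eq_zero hΩ hfin hproj (hmem u hu).1
        (hmem u hu).2
    · rw [setOf_exists_mem_map_eq hL fun u hu =>
        rayleighD_comp_fst hΩ hfin hproj (hmem u hu).1.continuousOn]

theorem stmt19 (d : ℕ) (hd : 2 ≤ d) (Ω : Set (ℝ × (Fin (d - 1) → ℝ)))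
    (hopen : IsOpen Ω) (hconn : IsConnected Ω) (hbdd : Bornology.IsBounded Ω)
    (hdiam : Metric.diam Ω = 1)
    (hproj : ∀ p ∈ Ω, p.1 ∈ Set.Icc (0:ℝ) 1)
    (hdiamax : ∃ p ∈ closure Ω, ∃ q ∈ closure Ω,
      p.1 = 0 ∧ q.1 = 1 ∧ dist p q = 1)
    (h : ℝ → ℝ)
    (hh : ∀ x, h x = (volume {y : Fin (d - 1) → ℝ | (x, y) ∈ Ω}).toReal) :
    ∀ k : ℕ, 1 ≤ k → mukNeumann k Ω ≤ muk1D k h :=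
  stmt19_general d Ω hopen hbdd hproj h hh
end
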